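/- arXiv:2007.15116 — 4 statements merged into one kernel-verified Lean document; each statement's English description precedes it below -/
import Mathlib

section
/- Let G be a groupoid, K a commutative ring, R a K-algebra, and β = ({E_g}_{g∈G}, {β_g}_{g∈G}) a unital action of G on R. For any subalgebra T of R, the set H_T = {g ∈ G | β_g(t1_{g⁻¹}) = t1_g for all t ∈ T} is a subgroupoid of G. -/
open scoped BigOperators

attribute [local instance] Classical.propDecidable

universe u v w

/-- A groupoid in the sense of Lawson: a (nonempty) set `G` with a partially defined
binary operation (here totalized: `mul g h` is only meaningful when `d g = r h`),
inverses, and one-sided identities `r g = g * g⁻¹` and `d g = g⁻¹ * g`. -/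
structure Gpd (G : Type*) where
  d : G → G
  r : G → G
  mul : G → G → G
  inv : G → G
  assoc : ∀ g h l, d g = r h → d h = r l → mul (mul g h) l = mul g (mul h l)
  d_mul : ∀ g h, d g = r h → d (mul g h) = d h
  r_mul : ∀ g h, d g = r h → r (mul g h) = r g
  d_inv : ∀ g, d (inv g) = r g
  r_inv : ∀ g, r (inv g) = d g
  inv_inv : ∀ g, inv (inv g) = g
  mul_inv : ∀ g, mul g (inv g) = r g
  inv_mul : ∀ g, mul (inv g) g = d g
  mul_d : ∀ g, mul g (d g) = g
  r_mul_self : ∀ g, mul (r g) g = g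
  d_d : ∀ g, d (d g) = d g
  r_d : ∀ g, r (d g) = d g
  inv_d : ∀ g, inv (d g) = d g

namespace Gpd

variable {G : Type*} (gpd : Gpd G)

/-- The set `G₀` of identities of the groupoid. -/
def idts : Set G := Set.range gpd.d

/-- `H` is a subgroupoid: a nonempty subset closed under inverses and under all
defined products. -/
def IsSubgpd (H : Set G) : Prop :=
  H.Nonempty ∧ (∀ g ∈ H, gpd.inv g ∈ H) ∧
    ∀ g ∈ H, ∀ h ∈ H, gpd.d g = gpd.r h → gpd.mul g h ∈ H

/-- A wide subgroupoid: a subgroupoid containing all the identities of `G`. -/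
def IsWide (H : Set G) : Prop := gpd.IsSubgpd H ∧ gpd.idts ⊆ H

/-- The subgroupoid generated by a subset `X` of `G`: the intersection of all
subgroupoids containing `X`. -/
def gen (X : Set G) : Set G := ⋂₀ {H : Set G | gpd.IsSubgpd H ∧ X ⊆ H}

end Gpd

/-- A unital action `β` of a groupoid `gpd` on a `K`-algebra `R`.  Each ideal
`E_g = E_{r g}` is the unital ideal `R·(one g)` generated by the central idempotent
`one g` (the identity element `1_g` of `E_g`), and `act g` encodes the `K`-algebra
isomorphism `β_g : E_{g⁻¹} → E_g` (only the values `act g (x * one (inv g))` on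
`E_{g⁻¹}` are relevant). -/
structure GpdAct (K : Type*) [CommRing K] (R : Type*) [Ring R] [Algebra K R]
    {G : Type*} (gpd : Gpd G) where
  one : G → R
  one_central : ∀ g x, one g * x = x * one g
  one_idem : ∀ g, one g * one g = one g
  one_r : ∀ g, one g = one (gpd.r g)
  act : G → R → R
  act_mem : ∀ g x, act g (x * one (gpd.inv g)) * one g = act g (x * one (gpd.inv g))
  act_add : ∀ g x y, act g ((x + y) * one (gpd.inv g)) =
      act g (x * one (gpd.inv g)) + act g (y * one (gpd.inv g))
  act_mul : ∀ g x y, act g (x * y * one (gpd.inv g)) =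
      act g (x * one (gpd.inv g)) * act g (y * one (gpd.inv g))
  act_smul : ∀ g (k : K) (x : R),
      act g (k • x * one (gpd.inv g)) = k • act g (x * one (gpd.inv g))
  act_unit : ∀ g, act g (one (gpd.inv g)) = one g
  act_id : ∀ g x, act (gpd.d g) (x * one (gpd.d g)) = x * one (gpd.d g)
  act_comp : ∀ g h x, gpd.d g = gpd.r h →
      act g (act h (x * one (gpd.inv h)) * one (gpd.inv g)) =
        act (gpd.mul g h) (x * one (gpd.inv h))

section Defs

variable {K : Type*} [CommRing K] {R : Type*} [Ring R] [Algebra K R]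
  {G : Type*} (gpd : Gpd G) (β : GpdAct K R gpd)

/-- The invariants `R^{β_H}` of `R` under the restriction of the action to a
subset `H` of `G`: all `x` with `β_h(x 1_{h⁻¹}) = x 1_h` for all `h ∈ H`. -/
def fixedSet (H : Set G) : Set R :=
  {x : R | ∀ h ∈ H, β.act h (x * β.one (gpd.inv h)) = x * β.one h}

/-- `J_g = {t ∈ E_g | t β_g(x 1_{g⁻¹}) = x t for all x ∈ R}`. -/
def Jset (g : G) : Set R :=
  {t : R | t * β.one g = t ∧ ∀ x : R, t * β.act g (x * β.one (gpd.inv g)) = x * t}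

/-- `H_S = {g ∈ G | β_g(s 1_{g⁻¹}) = s 1_g for all s ∈ S}`. -/
def Hset (S : Set R) : Set G :=
  {g : G | ∀ s ∈ S, β.act g (s * β.one (gpd.inv g)) = s * β.one g}

/-- `R = ⊕_{e ∈ G₀} E_e`, i.e. the identity elements of the ideals `E_e`, `e ∈ G₀`,
are pairwise orthogonal central idempotents summing to `1`. -/
def IsDecomp [Fintype G] : Prop :=
  (∑ e : G, if e ∈ gpd.idts then β.one e else 0) = 1 ∧
    ∀ e f : G, e ∈ gpd.idts → f ∈ gpd.idts → e ≠ f → β.one e * β.one f = 0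

/-- `R` is a `β`-Galois extension of `R^β`: there is a Galois coordinate system
`x_i, y_i` with `Σ_i x_i β_g(y_i 1_{g⁻¹}) = δ_{e,g} 1_e` for all `e ∈ G₀`, `g ∈ G`. -/
def IsGaloisExt [Fintype G] : Prop :=
  ∃ (n : ℕ) (x y : Fin n → R), ∀ g : G,
    (∑ i, x i * β.act g (y i * β.one (gpd.inv g))) = if g ∈ gpd.idts then β.one g else 0

/-- `V = ⊕_{g ∈ H} J_g`: every family `(f g)_{g ∈ H}` with `f g ∈ J_g` sums into `V`,
and every element of `V` is in a unique way such a sum (internal direct sum). -/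
def IsDirectSumOver [Fintype G] (H : Set G) (V : Set R) : Prop :=
  (∀ f : G → R, (∀ g, f g ∈ Jset gpd β g) → (∀ g, g ∉ H → f g = 0) → (∑ g, f g) ∈ V) ∧
    ∀ v ∈ V, ∃! f : G → R,
      (∀ g, f g ∈ Jset gpd β g) ∧ (∀ g, g ∉ H → f g = 0) ∧ v = ∑ g, f g

/-- `γ(H) = ⊕_{h ∈ H} J_h`, as the set of all sums `Σ_{h ∈ H} j_h`, `j_h ∈ J_h`. -/
def gammaSet [Fintype G] (H : Set G) : Set R :=
  {v : R | ∃ f : G → R,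
    (∀ g, f g ∈ Jset gpd β g) ∧ (∀ g, g ∉ H → f g = 0) ∧ v = ∑ g, f g}

/-- The product `J_h J_g`: all finite sums of products `a b` with `a ∈ J_h`, `b ∈ J_g`. -/
def JprodSet (h g : G) : Set R :=
  {z : R | ∃ (n : ℕ) (a b : Fin n → R),
    (∀ i, a i ∈ Jset gpd β h) ∧ (∀ i, b i ∈ Jset gpd β g) ∧ z = ∑ i, a i * b i}

end Defs

section Sep

variable {R : Type u} [Ring R]

/-- A biadditive pairing `φ : R × R → N` is `S`-balanced if `φ(u s, v) = φ(u, s v)`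
for all `s ∈ S`.  Such pairings are exactly the additive maps out of `R ⊗_S R`,
so they detect equality in `R ⊗_S R`. -/
def IsBalanced (S : Set R) {N : Type v} [AddCommGroup N] (φ : R →+ R →+ N) : Prop :=
  ∀ u v s : R, s ∈ S → φ (u * s) v = φ u (s * v)

/-- `R` is a separable extension of the subring `S ⊆ R`: there is
`z = Σ_i x_i ⊗ y_i ∈ R ⊗_S R` with `Σ_i x_i y_i = 1` and `a z = z a` for all `a ∈ R`
(the latter expressed via all `S`-balanced pairings, which detect equality in
`R ⊗_S R`). -/
def RSepOver (S : Set R) : Prop :=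
  ∃ (n : ℕ) (x y : Fin n → R), (∑ i, x i * y i) = 1 ∧
    ∀ (N : Type v) [AddCommGroup N] (φ : R →+ R →+ N), IsBalanced S φ →
      ∀ a : R, (∑ i, φ (a * x i) (y i)) = ∑ i, φ (x i) (y i * a)

/-- `R` is a Hirata separable extension of `S`: `R ⊗_S R` is isomorphic as an
`R`-bimodule to a direct summand of a finite direct sum of copies of `R`.
Equivalently (Casimir elements): there are `R`-central elements
`e_k = Σ_i x_{k,i} ⊗ y_{k,i} ∈ (R ⊗_S R)^R` and `a_k ∈ V_R(S)` with
`Σ_k a_k e_k = 1 ⊗ 1` (centrality and the last equation expressed via all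
`S`-balanced pairings, which detect equality in `R ⊗_S R`). -/
def HirataSep (S : Set R) : Prop :=
  ∃ (n m : ℕ) (x y : Fin n → Fin m → R) (a : Fin n → R),
    (∀ k, a k ∈ Set.centralizer S) ∧
    ∀ (N : Type v) [AddCommGroup N] (φ : R →+ R →+ N), IsBalanced S φ →
      (∀ (k : Fin n) (r : R),
        (∑ i, φ (r * x k i) (y k i)) = ∑ i, φ (x k i) (y k i * r)) ∧
      (∑ k, ∑ i, φ (a k * x k i) (y k i)) = φ 1 1

/-- The subring `A` of `R` is a separable extension of the subring `S ⊆ A`: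
there is `z = Σ_i x_i ⊗ y_i ∈ A ⊗_S A` with `Σ_i x_i y_i = 1` and `a z = z a`
for all `a ∈ A`. -/
def SubSepOver (A : Subring R) (S : Set R) : Prop :=
  ∃ (n : ℕ) (x y : Fin n → A), (∑ i, (x i : R) * (y i : R)) = 1 ∧
    ∀ (N : Type v) [AddCommGroup N] (φ : A →+ A →+ N),
      (∀ u v s : A, (s : R) ∈ S → φ (u * s) v = φ u (s * v)) →
      ∀ a : A, (∑ i, φ (a * x i) (y i)) = ∑ i, φ (x i) (y i * a)

end Sep

/-- `R` satisfies the fundamental theorem: the Galois map `θ : H ↦ R^{β_H}` is a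
bijection from the set of wide subgroupoids of `G` onto the set of subalgebras of
`R` which are separable over `R^β`. -/
def SatisfiesFT {K : Type*} [CommRing K] {R : Type u} [Ring R] [Algebra K R]
    {G : Type*} [Fintype G] (gpd : Gpd G) (β : GpdAct K R gpd) : Prop :=
  (∀ H : Set G, gpd.IsWide H → ∃ A : Subring R, (A : Set R) = fixedSet gpd β H ∧
      fixedSet gpd β Set.univ ⊆ (A : Set R) ∧
      SubSepOver.{u, v} A (fixedSet gpd β Set.univ)) ∧
  (∀ H L : Set G, gpd.IsWide H → gpd.IsWide L →
      fixedSet gpd β H = fixedSet gpd β L → H = L) ∧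
  (∀ A : Subring R, fixedSet gpd β Set.univ ⊆ (A : Set R) →
      SubSepOver.{u, v} A (fixedSet gpd β Set.univ) →
      ∃ H : Set G, gpd.IsWide H ∧ fixedSet gpd β H = (A : Set R))

/-- Lemma 2.1: for any subalgebra `T` of `R`, the set
`H_T = {g ∈ G | β_g(t 1_{g⁻¹}) = t 1_g for all t ∈ T}` is a subgroupoid of `G`. -/
theorem Hset_isSubgpd {K : Type*} [CommRing K] {R : Type*} [Ring R] [Algebra K R]
    {G : Type*} [Nonempty G] (gpd : Gpd G) (β : GpdAct K R gpd) (T : Subalgebra K R) :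
    gpd.IsSubgpd (Hset gpd β (T : Set R)) := by
  obtain ⟨g0⟩ := ‹Nonempty G›
  -- key: all identities belong to H_T
  have hid : ∀ g : G, gpd.d g ∈ Hset gpd β (T : Set R) := by
    intro g t _
    rw [gpd.inv_d, β.act_id]
  refine ⟨⟨gpd.d g0, hid g0⟩, ?_, ?_⟩
  · -- closed under inverses
    intro g hg t ht
    have h1 : β.act g (t * β.one (gpd.inv g)) = t * β.one g := hg t ht
    have hcomp := β.act_comp (gpd.inv g) g t (by rw [gpd.d_inv])
    rw [gpd.inv_mul, h1, gpd.inv_inv] at hcomp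
    have e1 : β.one (gpd.inv g) = β.one (gpd.d g) := by
      rw [β.one_r (gpd.inv g), gpd.r_inv]
    rw [mul_assoc, β.one_idem] at hcomp
    rw [gpd.inv_inv]
    rw [hcomp, e1, β.act_id, ← e1]
  · -- closed under products
    intro g hg h hh hdr t ht
    have e1 : β.one (gpd.inv (gpd.mul g h)) = β.one (gpd.inv h) := by
      rw [β.one_r (gpd.inv (gpd.mul g h)), gpd.r_inv, gpd.d_mul g h hdr,
        β.one_r (gpd.inv h), gpd.r_inv]
    have e2 : β.one (gpd.mul g h) = β.one g := by
      rw [β.one_r (gpd.mul g h), gpd.r_mul g h hdr, ← β.one_r g]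
    have e3 : β.one h = β.one (gpd.inv g) := by
      rw [β.one_r h, ← hdr, β.one_r (gpd.inv g), gpd.r_inv]
    have hcomp := β.act_comp g h t hdr
    rw [hh t ht, e3, mul_assoc, β.one_idem, hg t ht] at hcomp
    rw [e1, e2, ← hcomp]
end

section
/- Under the standing hypotheses, the commutator of R^β in R is the internal direct sum of the C(R)-submodules J_g: V_R(R^β) = ⊕_{g∈G} J_g. -/
open scoped BigOperators

attribute [local instance] Classical.propDecidable

universe u v w

/-! For `v` commuting with `R^β`, the Galois coordinates give projections
`π_g(v) = Σ_i x_i v β_g(y_i 1_{g⁻¹})`. Since the trace `Σ_g β_g(· 1_{g⁻¹})` takes values in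
`R^β` and `(x, y)` is a pair of dual bases for it, `π_g(v)` lies in `J_g` and the `π_g(v)` sum
to `v`. On `J_h` the projection `π_g` is `δ_{g,h}`, which gives uniqueness. -/

open Finset

namespace Gpd

variable {G : Type*} (gpd : Gpd G)

lemma d_mem_idts (g : G) : gpd.d g ∈ gpd.idts := ⟨g, rfl⟩

lemma r_mem_idts (g : G) : gpd.r g ∈ gpd.idts := ⟨gpd.inv g, gpd.d_inv g⟩

lemma r_of_mem_idts {e : G} (he : e ∈ gpd.idts) : gpd.r e = e := by
  obtain ⟨g, rfl⟩ := he
  exact gpd.r_d g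

lemma inv_of_mem_idts {e : G} (he : e ∈ gpd.idts) : gpd.inv e = e := by
  obtain ⟨g, rfl⟩ := he
  exact gpd.inv_d g

lemma inv_mem_idts_iff {g : G} : gpd.inv g ∈ gpd.idts ↔ g ∈ gpd.idts := by
  refine ⟨fun hg => ?_, fun hg => by rwa [gpd.inv_of_mem_idts hg]⟩
  have hgg := gpd.inv_of_mem_idts hg
  rw [gpd.inv_inv] at hgg
  exact hgg ▸ hg

lemma inv_mul_mul_cancel {g h : G} (hgh : gpd.d g = gpd.r h) :
    gpd.mul (gpd.inv g) (gpd.mul g h) = h := by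
  rw [← gpd.assoc _ _ _ (gpd.d_inv g) hgh, gpd.inv_mul, hgh, gpd.r_mul_self]

lemma mul_inv_mul_cancel {g k : G} (hgk : gpd.r g = gpd.r k) :
    gpd.mul g (gpd.mul (gpd.inv g) k) = k := by
  rw [← gpd.assoc _ _ _ (gpd.r_inv g).symm ((gpd.d_inv g).trans hgk), gpd.mul_inv, hgk,
    gpd.r_mul_self]

lemma inv_mul_mem_idts_iff {g h : G} (hgh : gpd.r g = gpd.r h) :
    gpd.mul (gpd.inv h) g ∈ gpd.idts ↔ g = h := by
  refine ⟨fun hk => ?_, fun hgh => hgh ▸ gpd.inv_mul g ▸ gpd.d_mem_idts g⟩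
  have hcomp : gpd.d (gpd.inv h) = gpd.r g := (gpd.d_inv h).trans hgh.symm
  have hk : gpd.mul (gpd.inv h) g = gpd.d h := by
    rw [← gpd.r_of_mem_idts hk, gpd.r_mul _ _ hcomp, gpd.r_inv]
  rw [← gpd.mul_inv_mul_cancel hgh.symm, hk, gpd.mul_d]

end Gpd

namespace GpdAct

variable {K : Type*} [CommRing K] {R : Type*} [Ring R] [Algebra K R]
  {G : Type*} {gpd : Gpd G} (β : GpdAct K R gpd)

def app (g : G) (x : R) : R := β.act g (x * β.one (gpd.inv g))

lemma app_add (g : G) (x y : R) : β.app g (x + y) = β.app g x + β.app g y := β.act_add g x y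

lemma app_mul (g : G) (x y : R) : β.app g (x * y) = β.app g x * β.app g y := β.act_mul g x y

lemma app_zero (g : G) : β.app g 0 = 0 := by
  simpa using β.app_add g 0 0

lemma app_sum {ι : Type*} (g : G) (s : Finset ι) (x : ι → R) :
    β.app g (∑ i ∈ s, x i) = ∑ i ∈ s, β.app g (x i) :=
  map_sum (AddMonoidHom.mk' (β.app g) (β.app_add g)) x s

lemma app_one_inv (g : G) : β.app g (β.one (gpd.inv g)) = β.one g := by
  rw [app, β.one_idem, β.act_unit]

lemma app_mul_one (g : G) (x : R) : β.app g x * β.one g = β.app g x := β.act_mem g x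

lemma one_mul_app (g : G) (x : R) : β.one g * β.app g x = β.app g x := by
  rw [β.one_central, app_mul_one]

lemma one_inv (g : G) : β.one (gpd.inv g) = β.one (gpd.d g) := by
  rw [β.one_r, gpd.r_inv]

lemma app_mul_one_inv (g : G) (x : R) : β.app g (x * β.one (gpd.inv g)) = β.app g x := by
  rw [app, mul_assoc, β.one_idem, app]

lemma app_of_mem_idts {e : G} (he : e ∈ gpd.idts) (x : R) : β.app e x = x * β.one e := by
  obtain ⟨g, rfl⟩ := he
  rw [app, gpd.inv_d, β.act_id]

lemma app_app {g h : G} (hgh : gpd.d g = gpd.r h) (x : R) :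
    β.app g (β.app h x) = β.app (gpd.mul g h) x := by
  rw [app, app, β.act_comp g h x hgh, app, β.one_inv, β.one_inv, gpd.d_mul g h hgh]

lemma mem_Jset_iff {g : G} {t : R} :
    t ∈ Jset gpd β g ↔ t * β.one g = t ∧ ∀ x, t * β.app g x = x * t := Iff.rfl

lemma mem_fixedSet_univ_iff {x : R} :
    x ∈ fixedSet gpd β Set.univ ↔ ∀ g, β.app g x = x * β.one g := by
  simp only [fixedSet, Set.mem_univ, true_imp_iff, Set.mem_ofPred_eq, app]

lemma Jset_subset_centralizer (g : G) :
    Jset gpd β g ⊆ Set.centralizer (fixedSet gpd β Set.univ) := by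
  intro t ht s hs
  obtain ⟨ht_one, ht⟩ := β.mem_Jset_iff.mp ht
  rw [← ht s, β.mem_fixedSet_univ_iff.mp hs g, ← β.one_central, ← mul_assoc, ht_one]

lemma one_d_mul_of_mem_Jset {h : G} {t : R} (ht : t ∈ Jset gpd β h) :
    β.one (gpd.d h) * t = t := by
  obtain ⟨ht_one, ht⟩ := β.mem_Jset_iff.mp ht
  rw [← β.one_inv, ← ht, β.app_one_inv, ht_one]

lemma mul_app_of_mem_Jset {g h : G} {t : R} (ht : t ∈ Jset gpd β h)
    (hgh : gpd.r g = gpd.r h) (z : R) :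
    t * β.app g z = β.app (gpd.mul (gpd.inv h) g) z * t := by
  have hcomp : gpd.d h = gpd.r (gpd.mul (gpd.inv h) g) := by
    rw [gpd.r_mul _ _ ((gpd.d_inv h).trans hgh.symm), gpd.r_inv]
  rw [← (β.mem_Jset_iff.mp ht).2, β.app_app hcomp, gpd.mul_inv_mul_cancel hgh.symm]

lemma ite_one_mul_app (h : G) (a : R) :
    (if h ∈ gpd.idts then β.one h else 0) * β.app h a =
      (if h ∈ gpd.idts then β.one h else 0) * a := by
  split_ifs with hh
  · rw [one_mul_app, app_of_mem_idts _ hh, β.one_central]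
  · rw [zero_mul, zero_mul]

lemma app_mul_ite_one (h : G) (a : R) :
    β.app h a * (if h ∈ gpd.idts then β.one h else 0) =
      a * (if h ∈ gpd.idts then β.one h else 0) := by
  split_ifs with hh
  · rw [app_mul_one, app_of_mem_idts _ hh]
  · rw [mul_zero, mul_zero]

def Jproj {ι : Type*} [Fintype ι] (x y : ι → R) (g : G) (v : R) : R :=
  ∑ i, x i * v * β.app g (y i)

lemma Jproj_sum {ι κ : Type*} [Fintype ι] (x y : ι → R) (g : G) (s : Finset κ) (f : κ → R) :
    β.Jproj x y g (∑ k ∈ s, f k) = ∑ k ∈ s, β.Jproj x y g (f k) := by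
  simp only [Jproj, mul_sum, sum_mul]
  exact sum_comm

def IsGaloisCoords {ι : Type*} [Fintype ι] (x y : ι → R) : Prop :=
  ∀ g : G, ∑ i, x i * β.app g (y i) = if g ∈ gpd.idts then β.one g else 0

lemma IsGaloisCoords.sum_app_mul {ι : Type*} [Fintype ι] {x y : ι → R}
    (hxy : β.IsGaloisCoords x y) (h : G) :
    ∑ i, β.app h (x i) * y i = if h ∈ gpd.idts then β.one h else 0 := by
  have key := congrArg (β.app h) (hxy (gpd.inv h))
  have term : ∀ i, β.app h (x i * β.app (gpd.inv h) (y i)) = β.app h (x i) * y i := fun i => by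
    rw [app_mul, β.app_app (gpd.r_inv h).symm, gpd.mul_inv, app_of_mem_idts _ (gpd.r_mem_idts h),
      ← β.one_r, ← β.one_central, ← mul_assoc, app_mul_one]
  simp only [app_sum, term, gpd.inv_mem_idts_iff] at key
  rw [key]
  split_ifs
  · exact β.app_one_inv h
  · exact β.app_zero h

section Decomp

variable [Fintype G] {β}

lemma one_mul_one_eq_zero (hdec : IsDecomp gpd β) {g h : G} (hgh : gpd.r g ≠ gpd.r h) :
    β.one g * β.one h = 0 := by
  rw [β.one_r g, β.one_r h]
  exact hdec.2 _ _ (gpd.r_mem_idts g) (gpd.r_mem_idts h) hgh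

lemma app_mul_one_of_ne (hdec : IsDecomp gpd β) {g h : G} (hgh : gpd.r g ≠ gpd.r h) (x : R) :
    β.app g x * β.one h = 0 := by
  rw [← β.app_mul_one, mul_assoc, one_mul_one_eq_zero hdec hgh, mul_zero]

lemma app_app_of_ne (hdec : IsDecomp gpd β) {g h : G} (hgh : gpd.d g ≠ gpd.r h) (x : R) :
    β.app g (β.app h x) = 0 := by
  rw [← β.app_mul_one_inv, app_mul_one_of_ne hdec (by rwa [gpd.r_inv, ne_comm]), β.app_zero]

lemma mul_app_of_mem_Jset_of_ne (hdec : IsDecomp gpd β) {g h : G} {t : R}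
    (ht : t ∈ Jset gpd β h) (hgh : gpd.r g ≠ gpd.r h) (z : R) : t * β.app g z = 0 := by
  rw [← (β.mem_Jset_iff.mp ht).1, ← β.one_mul_app, mul_assoc, ← mul_assoc (β.one h),
    one_mul_one_eq_zero hdec hgh.symm, zero_mul, mul_zero]

variable (β) in
def trace (x : R) : R := ∑ g, β.app g x

lemma app_trace (hdec : IsDecomp gpd β) (g : G) (x : R) :
    β.app g (β.trace x) = β.trace x * β.one g := by
  have lhs : β.app g (β.trace x) =
      ∑ h ∈ univ.filter (fun h => gpd.r h = gpd.d g), β.app (gpd.mul g h) x := by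
    rw [trace, app_sum, sum_filter]
    refine sum_congr rfl fun h _ => ?_
    split_ifs with hh
    · exact β.app_app hh.symm x
    · exact app_app_of_ne hdec (Ne.symm hh) x
  have rhs : β.trace x * β.one g = ∑ k ∈ univ.filter (fun k => gpd.r k = gpd.r g), β.app k x := by
    rw [trace, sum_mul, sum_filter]
    refine sum_congr rfl fun k _ => ?_
    split_ifs with hk
    · rw [β.one_r g, ← hk, ← β.one_r, app_mul_one]
    · exact app_mul_one_of_ne hdec hk x
  rw [lhs, rhs]
  -- `h ↦ g h` is a bijection from the arrows ending at `d g` onto those ending at `r g`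
  refine sum_nbij' (gpd.mul g) (gpd.mul (gpd.inv g)) ?_ ?_ ?_ ?_ fun _ _ => rfl <;>
    simp only [mem_filter, mem_univ, true_and]
  · exact fun h hh => gpd.r_mul g h hh.symm
  · exact fun k hk => by rw [gpd.r_mul _ _ ((gpd.d_inv g).trans hk.symm), gpd.r_inv]
  · exact fun h hh => gpd.inv_mul_mul_cancel hh.symm
  · exact fun k hk => gpd.mul_inv_mul_cancel hk.symm

lemma trace_mem_fixedSet (hdec : IsDecomp gpd β) (x : R) :
    β.trace x ∈ fixedSet gpd β Set.univ :=
  β.mem_fixedSet_univ_iff.mpr fun g => app_trace hdec g x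

lemma app_trace_mul (hdec : IsDecomp gpd β) (g : G) (x z : R) :
    β.app g (β.trace x * z) = β.trace x * β.app g z := by
  rw [app_mul, app_trace hdec, mul_assoc, one_mul_app]

namespace IsGaloisCoords

variable {ι : Type*} [Fintype ι] {x y : ι → R}

lemma sum_mul_trace (hxy : β.IsGaloisCoords x y) (hdec : IsDecomp gpd β) (a : R) :
    ∑ i, x i * β.trace (y i * a) = a :=
  calc ∑ i, x i * β.trace (y i * a)
      = ∑ h, (∑ i, x i * β.app h (y i)) * β.app h a := by
        simp only [trace, app_mul, mul_sum, sum_mul, mul_assoc]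
        exact sum_comm
    _ = ∑ h, (if h ∈ gpd.idts then β.one h else 0) * a :=
        sum_congr rfl fun h _ => by rw [hxy h, ite_one_mul_app]
    _ = a := by rw [← sum_mul, hdec.1, one_mul]

lemma sum_trace_mul (hxy : β.IsGaloisCoords x y) (hdec : IsDecomp gpd β) (a : R) :
    ∑ i, β.trace (a * x i) * y i = a :=
  calc ∑ i, β.trace (a * x i) * y i
      = ∑ h, β.app h a * ∑ i, β.app h (x i) * y i := by
        simp only [trace, app_mul, mul_sum, sum_mul, mul_assoc]
        exact sum_comm
    _ = ∑ h, a * (if h ∈ gpd.idts then β.one h else 0) := by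
        simp only [hxy.sum_app_mul, app_mul_ite_one]
    _ = a := by rw [← mul_sum, hdec.1, mul_one]

lemma Jproj_mem_Jset (hxy : β.IsGaloisCoords x y) (hdec : IsDecomp gpd β)
    {v : R} (hv : v ∈ Set.centralizer (fixedSet gpd β Set.univ)) (g : G) :
    β.Jproj x y g v ∈ Jset gpd β g := by
  refine β.mem_Jset_iff.mpr ⟨?_, fun a => ?_⟩
  · simp only [Jproj, sum_mul, mul_assoc, app_mul_one]
  have hcomm (b : R) : β.trace b * v = v * β.trace b :=
    Set.mem_centralizer_iff.mp hv _ (trace_mem_fixedSet hdec b)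
  -- expand `y i * a` in the coordinates `x, y`; the invariant coefficients commute with `v`
  calc β.Jproj x y g v * β.app g a = ∑ i, x i * v * β.app g (y i * a) := by
        simp only [Jproj, sum_mul, mul_assoc, app_mul]
    _ = ∑ i, ∑ j, x i * β.trace (y i * (a * x j)) * (v * β.app g (y j)) := by
        refine sum_congr rfl fun i _ => ?_
        conv_lhs => rw [← hxy.sum_trace_mul hdec (y i * a)]
        rw [app_sum, mul_sum]
        refine sum_congr rfl fun j _ => ?_
        simp only [app_trace_mul hdec, mul_assoc]
        rw [← mul_assoc v, ← hcomm, mul_assoc]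
    _ = ∑ j, (∑ i, x i * β.trace (y i * (a * x j))) * (v * β.app g (y j)) := by
        rw [sum_comm]
        simp only [sum_mul]
    _ = a * β.Jproj x y g v := by
        simp only [hxy.sum_mul_trace hdec, Jproj, mul_sum, mul_assoc]

lemma sum_Jproj (hxy : β.IsGaloisCoords x y) (hdec : IsDecomp gpd β)
    {v : R} (hv : v ∈ Set.centralizer (fixedSet gpd β Set.univ)) :
    ∑ g, β.Jproj x y g v = v :=
  calc ∑ g, β.Jproj x y g v = ∑ i, x i * (v * β.trace (y i)) := by
        simp only [Jproj, trace, mul_sum, mul_assoc]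
        exact sum_comm
    _ = ∑ i, x i * β.trace (y i * 1) * v := by
        simp only [mul_one, mul_assoc, Set.mem_centralizer_iff.mp hv _ (trace_mem_fixedSet hdec _)]
    _ = v := by rw [← sum_mul, hxy.sum_mul_trace hdec, one_mul]

lemma Jproj_of_mem_Jset (hxy : β.IsGaloisCoords x y) (hdec : IsDecomp gpd β)
    {h : G} {t : R} (ht : t ∈ Jset gpd β h) (g : G) :
    β.Jproj x y g t = if g = h then t else 0 := by
  by_cases hgh : gpd.r g = gpd.r h
  · have hproj : β.Jproj x y g t = (if gpd.mul (gpd.inv h) g ∈ gpd.idts then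
        β.one (gpd.mul (gpd.inv h) g) else 0) * t := by
      rw [← hxy, sum_mul]
      exact sum_congr rfl fun i _ => by rw [mul_assoc, mul_app_of_mem_Jset β ht hgh, mul_assoc]
    simp only [hproj, gpd.inv_mul_mem_idts_iff hgh]
    split_ifs with hg
    · subst hg
      rw [gpd.inv_mul, β.one_d_mul_of_mem_Jset ht]
    · exact zero_mul t
  · rw [if_neg fun hg : g = h => hgh (hg ▸ rfl)]
    exact sum_eq_zero fun i _ => by rw [mul_assoc, mul_app_of_mem_Jset_of_ne hdec ht hgh, mul_zero]

end IsGaloisCoords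

end Decomp

end GpdAct

theorem commutant_eq_directSum_Jset_general {K : Type*} [CommRing K] {R : Type*} [Ring R]
    [Algebra K R] {G : Type*} [Fintype G]
    (gpd : Gpd G) (β : GpdAct K R gpd)
    (hdec : IsDecomp gpd β) (hgal : IsGaloisExt gpd β) :
    IsDirectSumOver gpd β Set.univ (Set.centralizer (fixedSet gpd β Set.univ)) := by
  obtain ⟨n, x, y, hxy⟩ := hgal
  replace hxy : β.IsGaloisCoords x y := hxy
  refine ⟨fun f hf _ => ?_, fun v hv => ⟨fun g => β.Jproj x y g v,
    ⟨fun g => hxy.Jproj_mem_Jset hdec hv g, fun g hg => absurd (Set.mem_univ g) hg,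
      (hxy.sum_Jproj hdec hv).symm⟩, ?_⟩⟩
  · exact (Subring.centralizer _).sum_mem fun g _ => β.Jset_subset_centralizer g (hf g)
  · rintro f ⟨hfJ, -, rfl⟩
    funext g
    simp only [β.Jproj_sum, hxy.Jproj_of_mem_Jset hdec (hfJ _), sum_ite_eq, mem_univ, if_true]

/-- Lemma 3.1: `V_R(R^β) = ⊕_{g ∈ G} J_g`. -/
theorem commutant_eq_directSum_Jset {K : Type*} [CommRing K] {R : Type*} [Ring R]
    [Algebra K R] {G : Type*} [Fintype G] [Nonempty G]
    (gpd : Gpd G) (β : GpdAct K R gpd)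
    (hdec : IsDecomp gpd β) (hgal : IsGaloisExt gpd β) :
    IsDirectSumOver gpd β Set.univ (Set.centralizer (fixedSet gpd β Set.univ)) :=
  commutant_eq_directSum_Jset_general gpd β hdec hgal
end

section
/- Under the standing hypotheses, let H be a wide subgroupoid of G. Then γ(H) = ⊕_{h∈H} J_h is a subalgebra of R over C(R), and γ(H) = V_R(R^{β_{S_H}}), where R^{β_{S_H}} = {r ∈ R | β_h(r1_{h⁻¹}) = r1_h for each h ∈ S_H}. -/
open scoped BigOperators

attribute [local instance] Classical.propDecidable

universe u v w

section GammaAux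
set_option linter.unusedSectionVars false

variable {K : Type*} [CommRing K] {R : Type*} [Ring R] [Algebra K R]
  {G : Type*} [Fintype G] (gpd : Gpd G) (β : GpdAct K R gpd)

/-- `β_g` restricted to `E_{g⁻¹}`, as the additive map `x ↦ β_g(x 1_{g⁻¹})`. -/
def gphi (g : G) : R →+ R :=
  AddMonoidHom.mk' (fun x => β.act g (x * β.one (gpd.inv g))) (β.act_add g)

lemma gphi_apply (g : G) (x : R) : gphi gpd β g x = β.act g (x * β.one (gpd.inv g)) := rfl

lemma gphi_mul (g : G) (x y : R) :
    gphi gpd β g (x * y) = gphi gpd β g x * gphi gpd β g y := β.act_mul g x y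

lemma gphi_absorb (g : G) (x : R) : gphi gpd β g x * β.one g = gphi gpd β g x :=
  β.act_mem g x

lemma gphi_mul_one (g : G) (x : R) :
    gphi gpd β g (x * β.one (gpd.inv g)) = gphi gpd β g x := by
  simp only [gphi_apply, mul_assoc, β.one_idem]

lemma one_inv_eq (g : G) : β.one (gpd.inv g) = β.one (gpd.d g) := by
  rw [β.one_r (gpd.inv g), gpd.r_inv]

lemma mem_idts_d (g : G) : gpd.d g ∈ gpd.idts := ⟨g, rfl⟩

lemma mem_idts_r (g : G) : gpd.r g ∈ gpd.idts := ⟨gpd.inv g, gpd.d_inv g⟩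

lemma gphi_idt {e : G} (he : e ∈ gpd.idts) (x : R) : gphi gpd β e x = x * β.one e := by
  obtain ⟨k, rfl⟩ := he
  rw [gphi_apply, gpd.inv_d]
  exact β.act_id k x

lemma gphi_comp {k h : G} (hkh : gpd.d k = gpd.r h) (z : R) :
    gphi gpd β k (gphi gpd β h z) = gphi gpd β (gpd.mul k h) z := by
  simp only [gphi_apply]
  rw [β.act_comp k h z hkh, one_inv_eq gpd β h, one_inv_eq gpd β (gpd.mul k h),
    gpd.d_mul k h hkh]

lemma gphi_mul_one_ne (hdec : IsDecomp gpd β) {h : G} {k : G} (hne : gpd.r h ≠ k)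
    (hk : k ∈ gpd.idts) (z : R) : gphi gpd β h z * β.one k = 0 := by
  have h0 : β.one h * β.one k = 0 := by
    rw [β.one_r h]; exact hdec.2 _ _ (mem_idts_r gpd h) hk hne
  rw [← gphi_absorb gpd β h z, mul_assoc, h0, mul_zero]

lemma gphi_mul_one_eq {h k : G} (hrr : gpd.r h = gpd.r k) (z : R) :
    gphi gpd β h z * β.one k = gphi gpd β h z := by
  have : β.one k = β.one h := by rw [β.one_r h, β.one_r k, hrr]
  rw [this, gphi_absorb]

lemma gphi_gphi_ne (hdec : IsDecomp gpd β) {h k : G} (hne : gpd.r h ≠ gpd.d k) (z : R) :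
    gphi gpd β k (gphi gpd β h z) = 0 := by
  have h0 : gphi gpd β h z * β.one (gpd.inv k) = 0 := by
    rw [one_inv_eq]; exact gphi_mul_one_ne gpd β hdec hne (mem_idts_d gpd k) z
  rw [← gphi_mul_one gpd β k (gphi gpd β h z), h0, map_zero]

lemma gphi_gphi_ortho (hdec : IsDecomp gpd β) {l h : G} (hne : gpd.r h ≠ gpd.r l)
    (u v : R) : gphi gpd β l u * gphi gpd β h v = 0 := by
  have h0 : gphi gpd β h v * β.one l = 0 := by
    rw [β.one_r l]; exact gphi_mul_one_ne gpd β hdec hne (mem_idts_r gpd l) v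
  calc gphi gpd β l u * gphi gpd β h v
      = gphi gpd β l u * β.one l * gphi gpd β h v := by rw [gphi_absorb]
    _ = gphi gpd β l u * (gphi gpd β h v * β.one l) := by
        rw [mul_assoc, β.one_central]
    _ = 0 := by rw [h0, mul_zero]

/-- The trace relative to a subset `H` of `G`. -/
noncomputable def trH (H : Set G) (z : R) : R := ∑ h : G, if h ∈ H then gphi gpd β h z else 0

variable {n : ℕ} {x y : Fin n → R}

lemma c_eq (hxy : ∀ g : G, (∑ i, x i * gphi gpd β g (y i)) =
      if g ∈ gpd.idts then β.one g else 0) (g : G) (r : R) :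
    (∑ i, x i * gphi gpd β g (y i * r)) = if g ∈ gpd.idts then r * β.one g else 0 := by
  have h1 : ∀ i, x i * gphi gpd β g (y i * r)
      = x i * gphi gpd β g (y i) * gphi gpd β g r := by
    intro i; rw [gphi_mul, mul_assoc]
  rw [Finset.sum_congr rfl fun i _ => h1 i, ← Finset.sum_mul, hxy g]
  by_cases hg : g ∈ gpd.idts
  · rw [if_pos hg, if_pos hg, gphi_idt gpd β hg r, β.one_central g (r * β.one g),
      mul_assoc, β.one_idem]
  · rw [if_neg hg, if_neg hg, zero_mul]

lemma trH_fixed (hdec : IsDecomp gpd β) {H : Set G} (hH : gpd.IsWide H) (z : R) :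
    trH gpd β H z ∈ fixedSet gpd β H := by
  intro k hk
  show β.act k (trH gpd β H z * β.one (gpd.inv k)) = trH gpd β H z * β.one k
  have lhs : β.act k (trH gpd β H z * β.one (gpd.inv k)) =
      ∑ h : G, if h ∈ H ∧ gpd.r h = gpd.d k then gphi gpd β (gpd.mul k h) z else 0 := by
    show gphi gpd β k (trH gpd β H z) = _
    rw [trH, map_sum]
    refine Finset.sum_congr rfl fun h _ => ?_
    by_cases hh : h ∈ H
    · by_cases hrd : gpd.r h = gpd.d k
      · rw [if_pos hh, if_pos ⟨hh, hrd⟩, gphi_comp gpd β hrd.symm z]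
      · rw [if_pos hh, if_neg (fun hc => hrd hc.2), gphi_gphi_ne gpd β hdec hrd z]
    · rw [if_neg hh, if_neg (fun hc => hh hc.1), map_zero]
  have rhs : trH gpd β H z * β.one k =
      ∑ h : G, if h ∈ H ∧ gpd.r h = gpd.r k then gphi gpd β h z else 0 := by
    rw [trH, Finset.sum_mul]
    refine Finset.sum_congr rfl fun h _ => ?_
    by_cases hh : h ∈ H
    · by_cases hrr : gpd.r h = gpd.r k
      · rw [if_pos hh, if_pos ⟨hh, hrr⟩, gphi_mul_one_eq gpd β hrr z]
      · rw [if_pos hh, if_neg (fun hc => hrr hc.2), β.one_r k,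
          gphi_mul_one_ne gpd β hdec hrr (mem_idts_r gpd k) z]
    · rw [if_neg hh, if_neg (fun hc => hh hc.1), zero_mul]
  rw [lhs, rhs, ← Finset.sum_filter, ← Finset.sum_filter]
  refine Finset.sum_nbij' (fun h => gpd.mul k h) (fun h' => gpd.mul (gpd.inv k) h')
    ?_ ?_ ?_ ?_ ?_
  · intro h hmem
    rw [Finset.mem_filter] at hmem ⊢
    obtain ⟨-, hh, hrd⟩ := hmem
    exact ⟨Finset.mem_univ _, hH.1.2.2 k hk h hh hrd.symm, gpd.r_mul k h hrd.symm⟩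
  · intro h' hmem
    rw [Finset.mem_filter] at hmem ⊢
    obtain ⟨-, hh', hrr⟩ := hmem
    have hdk : gpd.d (gpd.inv k) = gpd.r h' := by rw [gpd.d_inv]; exact hrr.symm
    refine ⟨Finset.mem_univ _, hH.1.2.2 (gpd.inv k) (hH.1.2.1 k hk) h' hh' hdk, ?_⟩
    rw [gpd.r_mul (gpd.inv k) h' hdk, gpd.r_inv]
  · intro h hmem
    rw [Finset.mem_filter] at hmem
    obtain ⟨-, hh, hrd⟩ := hmem
    show gpd.mul (gpd.inv k) (gpd.mul k h) = h
    rw [← gpd.assoc (gpd.inv k) k h (gpd.d_inv k) hrd.symm, gpd.inv_mul k, ← hrd,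
      gpd.r_mul_self h]
  · intro h' hmem
    rw [Finset.mem_filter] at hmem
    obtain ⟨-, hh', hrr⟩ := hmem
    show gpd.mul k (gpd.mul (gpd.inv k) h') = h'
    rw [← gpd.assoc k (gpd.inv k) h' (gpd.r_inv k).symm (by rw [gpd.d_inv k]; exact hrr.symm),
      gpd.mul_inv k, ← hrr, gpd.r_mul_self h']
  · intro h hmem
    rfl

lemma trH_repr (hdec : IsDecomp gpd β) {H : Set G} (hH : gpd.IsWide H)
    (hxy : ∀ g : G, (∑ i, x i * gphi gpd β g (y i)) =
      if g ∈ gpd.idts then β.one g else 0) (r : R) :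
    (∑ j, x j * trH gpd β H (y j * r)) = r := by
  have h1 : ∀ j, x j * trH gpd β H (y j * r)
      = ∑ h : G, if h ∈ H then x j * gphi gpd β h (y j * r) else 0 := by
    intro j
    rw [trH, Finset.mul_sum]
    exact Finset.sum_congr rfl fun h _ => by split <;> simp
  rw [Finset.sum_congr rfl fun j _ => h1 j, Finset.sum_comm]
  have h2 : ∀ h : G, (∑ j, if h ∈ H then x j * gphi gpd β h (y j * r) else 0)
      = if h ∈ gpd.idts then r * β.one h else 0 := by
    intro h
    by_cases hh : h ∈ H
    · simp only [if_pos hh]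
      exact c_eq gpd β hxy h r
    · simp only [if_neg hh, Finset.sum_const_zero]
      rw [if_neg fun hi => hh (hH.2 hi)]
  rw [Finset.sum_congr rfl fun h _ => h2 h]
  have h3 : ∀ h : G, (if h ∈ gpd.idts then r * β.one h else 0)
      = r * (if h ∈ gpd.idts then β.one h else 0) := by
    intro h; split <;> simp
  rw [Finset.sum_congr rfl fun h _ => h3 h, ← Finset.mul_sum, hdec.1, mul_one]

lemma kanzaki (hdec : IsDecomp gpd β) {H : Set G} (hH : gpd.IsWide H)
    (hxy : ∀ g : G, (∑ i, x i * gphi gpd β g (y i)) =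
      if g ∈ gpd.idts then β.one g else 0) {h : G} (hh : h ∈ H) (w : R) :
    (∑ i, trH gpd β H (w * x i) * gphi gpd β h (y i)) = gphi gpd β h w := by
  have h1 : ∀ i, trH gpd β H (w * x i) * gphi gpd β h (y i)
      = ∑ l : G, if l ∈ H then gphi gpd β l (w * x i) * gphi gpd β h (y i) else 0 := by
    intro i
    rw [trH, Finset.sum_mul]
    exact Finset.sum_congr rfl fun l _ => by split <;> simp
  rw [Finset.sum_congr rfl fun i _ => h1 i, Finset.sum_comm]
  have h2 : ∀ l : G, (∑ i, if l ∈ H then gphi gpd β l (w * x i) * gphi gpd β h (y i) else 0)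
      = if l ∈ H then (∑ i, gphi gpd β l (w * x i) * gphi gpd β h (y i)) else 0 := by
    intro l; split <;> simp
  rw [Finset.sum_congr rfl fun l _ => h2 l]
  have inner : ∀ l : G, l ∈ H →
      (∑ i, gphi gpd β l (w * x i) * gphi gpd β h (y i))
        = if l = h then gphi gpd β h w else 0 := by
    intro l hl
    by_cases hrr : gpd.r l = gpd.r h
    · have hmr : gpd.d l = gpd.r (gpd.mul (gpd.inv l) h) := by
        rw [gpd.r_mul (gpd.inv l) h (by rw [gpd.d_inv]; exact hrr), gpd.r_inv]
      set m := gpd.mul (gpd.inv l) h with hmdef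
      have hlm : gpd.mul l m = h := by
        rw [hmdef, ← gpd.assoc l (gpd.inv l) h (gpd.r_inv l).symm (by rw [gpd.d_inv]; exact hrr),
          gpd.mul_inv l, hrr, gpd.r_mul_self]
      have hphih : ∀ v : R, gphi gpd β h v = gphi gpd β l (gphi gpd β m v) := by
        intro v
        rw [gphi_comp gpd β hmr v, hlm]
      have h3 : ∀ i, gphi gpd β l (w * x i) * gphi gpd β h (y i)
          = gphi gpd β l (w * (x i * gphi gpd β m (y i))) := by
        intro i
        rw [hphih (y i), ← gphi_mul gpd β l, mul_assoc]
      rw [Finset.sum_congr rfl fun i _ => h3 i, ← map_sum, ← Finset.mul_sum, hxy m]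
      by_cases hlh : l = h
      · subst hlh
        have hmd : m = gpd.d l := by rw [hmdef, gpd.inv_mul l]
        have hmi : m ∈ gpd.idts := hmd ▸ mem_idts_d gpd l
        rw [if_pos rfl, if_pos hmi]
        have hone : β.one m = β.one (gpd.inv l) := by rw [hmd, ← one_inv_eq]
        rw [hone, gphi_mul_one]
      · have hmni : m ∉ gpd.idts := by
          intro hmi
          apply hlh
          obtain ⟨k0, hk0⟩ := hmi
          have hrm : gpd.r m = m := by rw [← hk0, gpd.r_d]
          have hdl : gpd.d l = m := by rw [hmr, hrm]
          have : gpd.mul l m = l := by rw [← hdl, gpd.mul_d]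
          exact this.symm.trans hlm
        rw [if_neg hmni, if_neg hlh, mul_zero, map_zero]
    · have h4 : ∀ i, gphi gpd β l (w * x i) * gphi gpd β h (y i) = 0 := fun i =>
        gphi_gphi_ortho gpd β hdec (fun e => hrr e.symm) (w * x i) (y i)
      rw [Finset.sum_congr rfl fun i _ => h4 i, Finset.sum_const_zero,
        if_neg (fun e => hrr (by rw [e]))]
  have h5 : ∀ l : G, (if l ∈ H then (∑ i, gphi gpd β l (w * x i) * gphi gpd β h (y i)) else 0)
      = if l = h then gphi gpd β h w else 0 := by
    intro l
    by_cases hl : l ∈ H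
    · rw [if_pos hl, inner l hl]
    · rw [if_neg hl, if_neg (fun e : l = h => hl (by rw [e]; exact hh))]
  rw [Finset.sum_congr rfl fun l _ => h5 l, Finset.sum_ite_eq' Finset.univ h,
    if_pos (Finset.mem_univ h)]

lemma component_J (hdec : IsDecomp gpd β) {H : Set G} (hH : gpd.IsWide H)
    (hxy : ∀ g : G, (∑ i, x i * gphi gpd β g (y i)) =
      if g ∈ gpd.idts then β.one g else 0) {a : R}
    (hacomm : ∀ z : R, trH gpd β H z * a = a * trH gpd β H z)
    {g : G} (hg : g ∈ H) (r : R) :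
    r * (∑ i, x i * a * gphi gpd β g (y i)) = ∑ j, x j * a * gphi gpd β g (y j * r) := by
  calc r * ∑ i, x i * a * gphi gpd β g (y i)
      = ∑ i, r * x i * (a * gphi gpd β g (y i)) := by
        rw [Finset.mul_sum]
        refine Finset.sum_congr rfl fun i _ => ?_
        rw [← mul_assoc, ← mul_assoc, mul_assoc (r * x i)]
    _ = ∑ i, (∑ j, x j * trH gpd β H (y j * (r * x i))) * (a * gphi gpd β g (y i)) := by
        refine Finset.sum_congr rfl fun i _ => ?_
        rw [trH_repr gpd β hdec hH hxy (r * x i)]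
    _ = ∑ j, ∑ i, x j * a * (trH gpd β H (y j * (r * x i)) * gphi gpd β g (y i)) := by
        rw [Finset.sum_comm]
        refine Finset.sum_congr rfl fun i _ => ?_
        rw [Finset.sum_mul]
        refine Finset.sum_congr rfl fun j _ => ?_
        rw [mul_assoc (x j), ← mul_assoc (trH gpd β H (y j * (r * x i))), hacomm,
          mul_assoc a, ← mul_assoc (x j)]
    _ = ∑ j, x j * a * gphi gpd β g (y j * r) := by
        refine Finset.sum_congr rfl fun j _ => ?_
        rw [← Finset.mul_sum]
        congr 1
        have h6 : ∀ i : Fin n, trH gpd β H (y j * (r * x i)) * gphi gpd β g (y i)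
            = trH gpd β H (y j * r * x i) * gphi gpd β g (y i) := by
          intro i; rw [mul_assoc]
        rw [Finset.sum_congr rfl fun i _ => h6 i]
        exact kanzaki gpd β hdec hH hxy hg (y j * r)

end GammaAux

/-- Lemma 3.7: for a wide subgroupoid `H`, `γ(H) = ⊕_{h ∈ H} J_h` is
a subalgebra of `R` over `C(R)` (it contains the center and is closed under sums
and products), and `γ(H) = V_R(R^{β_{S_H}})`, where `S_H = {h ∈ H | J_h ≠ 0}`. -/
theorem gammaSet_subalgebra_and_eq_centralizer {K : Type*} [CommRing K] {R : Type*}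
    [Ring R] [Algebra K R] {G : Type*} [Fintype G] [Nonempty G]
    (gpd : Gpd G) (β : GpdAct K R gpd)
    (hdec : IsDecomp gpd β) (hgal : IsGaloisExt gpd β)
    (H : Set G) (hH : gpd.IsWide H) :
    Set.center R ⊆ gammaSet gpd β H ∧
    (∀ a ∈ gammaSet gpd β H, ∀ b ∈ gammaSet gpd β H,
        a + b ∈ gammaSet gpd β H ∧ a * b ∈ gammaSet gpd β H) ∧
    gammaSet gpd β H =
      Set.centralizer (fixedSet gpd β {h : G | h ∈ H ∧ Jset gpd β h ≠ {0}}) := by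
  obtain ⟨n, x, y, hxy0⟩ := hgal
  have hxy : ∀ g : G, (∑ i, x i * gphi gpd β g (y i)) =
      if g ∈ gpd.idts then β.one g else 0 := fun g => by
    simp only [gphi_apply]; exact hxy0 g
  have main : gammaSet gpd β H =
      Set.centralizer (fixedSet gpd β {h : G | h ∈ H ∧ Jset gpd β h ≠ {0}}) := by
    apply Set.Subset.antisymm
    · rintro v ⟨f, hf, hsupp, rfl⟩
      intro s hs
      rw [Finset.mul_sum, Finset.sum_mul]
      refine Finset.sum_congr rfl fun g _ => ?_
      by_cases hg : g ∈ H
      · by_cases hJ : Jset gpd β g = {0}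
        · have hf0 : f g ∈ ({0} : Set R) := hJ ▸ hf g
          rw [hf0, mul_zero, zero_mul]
        · have hsg := hs g ⟨hg, hJ⟩
          have h2 := (hf g).2 s
          rw [hsg] at h2
          rw [← h2, ← β.one_central g s, ← mul_assoc, (hf g).1]
      · rw [hsupp g hg, mul_zero, zero_mul]
    · intro a ha
      have hFH : fixedSet gpd β H ⊆
          fixedSet gpd β {h : G | h ∈ H ∧ Jset gpd β h ≠ {0}} :=
        fun s hsf h hh => hsf h hh.1
      have hacomm : ∀ z : R, trH gpd β H z * a = a * trH gpd β H z :=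
        fun z => ha _ (hFH (trH_fixed gpd β hdec hH z))
      refine ⟨fun h => if h ∈ H then ∑ i, x i * a * gphi gpd β h (y i) else 0, ?_, ?_, ?_⟩
      · intro g
        by_cases hg : g ∈ H
        · simp only [if_pos hg]
          refine ⟨?_, ?_⟩
          · rw [Finset.sum_mul]
            refine Finset.sum_congr rfl fun i _ => ?_
            rw [mul_assoc, gphi_absorb]
          · intro r
            show (∑ i, x i * a * gphi gpd β g (y i)) * gphi gpd β g r
              = r * ∑ i, x i * a * gphi gpd β g (y i)
            rw [component_J gpd β hdec hH hxy hacomm hg r, Finset.sum_mul]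
            refine Finset.sum_congr rfl fun i _ => ?_
            rw [mul_assoc, ← gphi_mul]
        · simp only [if_neg hg]
          exact ⟨zero_mul _, fun r => by rw [zero_mul, mul_zero]⟩
      · intro g hg
        exact if_neg hg
      · calc a = 1 * a := (one_mul a).symm
          _ = (∑ j, x j * trH gpd β H (y j * 1)) * a := by
              rw [trH_repr gpd β hdec hH hxy 1]
          _ = ∑ j, x j * a * trH gpd β H (y j) := by
              rw [Finset.sum_mul]
              refine Finset.sum_congr rfl fun j _ => ?_
              rw [mul_one, mul_assoc, hacomm, ← mul_assoc]
          _ = ∑ g : G, if g ∈ H then (∑ i, x i * a * gphi gpd β g (y i)) else 0 := by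
              have e1 : ∀ j, x j * a * trH gpd β H (y j)
                  = ∑ g : G, if g ∈ H then x j * a * gphi gpd β g (y j) else 0 := by
                intro j
                rw [trH, Finset.mul_sum]
                exact Finset.sum_congr rfl fun g _ => by split <;> simp
              rw [Finset.sum_congr rfl fun j _ => e1 j, Finset.sum_comm]
              refine Finset.sum_congr rfl fun g _ => ?_
              by_cases hg : g ∈ H <;> simp [hg]
  refine ⟨?_, ?_, main⟩
  · rw [main]
    exact Set.center_subset_centralizer _
  · intro p hp q hq
    rw [main] at hp hq ⊢
    exact ⟨Set.add_mem_centralizer hp hq, Set.mul_mem_centralizer hp hq⟩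
end

section
/- Under the standing hypotheses, assume R satisfies the double centralizer property for R^{β_H} for each subgroupoid H of G. Then the Galois map θ : H ↦ R^{β_H} (on wide subgroupoids of G) is injective if and only if the map γ : H ↦ ⊕_{h∈H} J_h (on wide subgroupoids of G) is injective. -/
open scoped BigOperators

attribute [local instance] Classical.propDecidable

universe u v w

section ThetaGammaProof

variable {K : Type*} [CommRing K] {R : Type*} [Ring R] [Algebra K R]
  {G : Type*} [Fintype G] (gpd : Gpd G) (β : GpdAct K R gpd)

namespace ThetaGamma

lemma r_mem_idts (g : G) : gpd.r g ∈ gpd.idts := ⟨gpd.inv g, gpd.d_inv g⟩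

lemma d_mem_idts (g : G) : gpd.d g ∈ gpd.idts := ⟨g, rfl⟩

lemma idts_r {e : G} (he : e ∈ gpd.idts) : gpd.r e = e := by
  obtain ⟨g, rfl⟩ := he; exact gpd.r_d g

lemma idts_inv {e : G} (he : e ∈ gpd.idts) : gpd.inv e = e := by
  obtain ⟨g, rfl⟩ := he; exact gpd.inv_d g

lemma one_inv (g : G) : β.one (gpd.inv g) = β.one (gpd.d g) := by
  rw [β.one_r (gpd.inv g), gpd.r_inv]

lemma act_zero (g : G) : β.act g 0 = 0 := by
  have h := β.act_add g 0 0
  rw [zero_add, zero_mul] at h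
  exact (left_eq_add.mp h)

lemma act_sum {ι : Type*} (g : G) (s : Finset ι) (f : ι → R) :
    β.act g ((∑ i ∈ s, f i) * β.one (gpd.inv g)) =
      ∑ i ∈ s, β.act g (f i * β.one (gpd.inv g)) := by
  classical
  induction s using Finset.cons_induction with
  | empty => rw [Finset.sum_empty, Finset.sum_empty, zero_mul, act_zero]
  | cons a s ha ih => rw [Finset.sum_cons, Finset.sum_cons, β.act_add, ih]

lemma one_absorb (e : G) (a : R) : β.one e * (a * β.one e) = a * β.one e := by
  rw [← mul_assoc, β.one_central, mul_assoc, β.one_idem]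

/-- `Σ_i x_i β_g(y_i a 1_{g⁻¹}) = δ_{g∈G₀} a 1_g`. -/
lemma gal_right {n : ℕ} {x y : Fin n → R}
    (hxy : ∀ g : G, (∑ i, x i * β.act g (y i * β.one (gpd.inv g))) =
      if g ∈ gpd.idts then β.one g else 0) (g : G) (a : R) :
    (∑ i, x i * β.act g (y i * a * β.one (gpd.inv g))) =
      if g ∈ gpd.idts then a * β.one g else 0 := by
  have key : (∑ i, x i * β.act g (y i * a * β.one (gpd.inv g)))
      = (∑ i, x i * β.act g (y i * β.one (gpd.inv g))) * β.act g (a * β.one (gpd.inv g)) := by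
    rw [Finset.sum_mul]
    exact Finset.sum_congr rfl fun i _ => by rw [β.act_mul, mul_assoc]
  rw [key, hxy]
  by_cases he : g ∈ gpd.idts
  · rw [if_pos he, if_pos he]
    obtain ⟨w, rfl⟩ := he
    rw [one_inv, gpd.d_d, β.act_id, one_absorb]
  · rw [if_neg he, if_neg he, zero_mul]

/-- `a = Σ_{h∈H} Σ_i x_i β_h(y_i a 1_{h⁻¹})` for wide `H`. -/
lemma gal_wide (hdec : IsDecomp gpd β) {H : Set G} (hw : gpd.IsWide H)
    {n : ℕ} {x y : Fin n → R}
    (hxy : ∀ g : G, (∑ i, x i * β.act g (y i * β.one (gpd.inv g))) =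
      if g ∈ gpd.idts then β.one g else 0) (a : R) :
    (∑ h : G, if h ∈ H then ∑ i, x i * β.act h (y i * a * β.one (gpd.inv h)) else 0)
      = a := by
  have h1 : ∀ h : G,
      (if h ∈ H then ∑ i, x i * β.act h (y i * a * β.one (gpd.inv h)) else 0)
        = a * (if h ∈ gpd.idts then β.one h else 0) := by
    intro h
    by_cases hh : h ∈ H
    · rw [if_pos hh, gal_right gpd β hxy]
      split <;> simp [mul_assoc]
    · rw [if_neg hh, if_neg (fun hid => hh (hw.2 hid)), mul_zero]
  rw [Finset.sum_congr rfl fun h _ => h1 h, ← Finset.mul_sum, hdec.1, mul_one]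

/-- `Σ_i β_k(x_i 1_{k⁻¹}) β_g(y_i 1_{g⁻¹}) = δ_{g,k} 1_k`. -/
lemma gal_transpose (hdec : IsDecomp gpd β) {n : ℕ} {x y : Fin n → R}
    (hxy : ∀ g : G, (∑ i, x i * β.act g (y i * β.one (gpd.inv g))) =
      if g ∈ gpd.idts then β.one g else 0) (k g : G) :
    (∑ i, β.act k (x i * β.one (gpd.inv k)) * β.act g (y i * β.one (gpd.inv g)))
      = if g = k then β.one k else 0 := by
  by_cases hr : gpd.r k = gpd.r g
  · -- compatible range case
    set g' := gpd.mul (gpd.inv k) g with hg'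
    have hdk : gpd.d (gpd.inv k) = gpd.r g := by rw [gpd.d_inv, hr]
    have hrg' : gpd.r g' = gpd.d k := by rw [hg', gpd.r_mul _ _ hdk, gpd.r_inv]
    have hdg' : gpd.d g' = gpd.d g := gpd.d_mul _ _ hdk
    have hkg' : gpd.mul k g' = g := by
      rw [hg', ← gpd.assoc k (gpd.inv k) g (by rw [gpd.r_inv]) hdk, gpd.mul_inv, hr,
        gpd.r_mul_self]
    have hone' : β.one (gpd.inv g') = β.one (gpd.inv g) := by
      rw [one_inv, one_inv, hdg']
    have step : ∀ i, β.act k (x i * β.act g' (y i * β.one (gpd.inv g')) * β.one (gpd.inv k))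
        = β.act k (x i * β.one (gpd.inv k)) * β.act g (y i * β.one (gpd.inv g)) := by
      intro i
      rw [β.act_mul, β.act_comp k g' (y i) hrg'.symm, hkg', hone']
    calc (∑ i, β.act k (x i * β.one (gpd.inv k)) * β.act g (y i * β.one (gpd.inv g)))
        = ∑ i, β.act k (x i * β.act g' (y i * β.one (gpd.inv g')) * β.one (gpd.inv k)) :=
          Finset.sum_congr rfl fun i _ => (step i).symm
      _ = β.act k ((∑ i, x i * β.act g' (y i * β.one (gpd.inv g'))) * β.one (gpd.inv k)) :=
          (act_sum gpd β k _ _).symm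
      _ = β.act k ((if g' ∈ gpd.idts then β.one g' else 0) * β.one (gpd.inv k)) := by
          rw [hxy g']
      _ = if g = k then β.one k else 0 := by
          by_cases hgk : g = k
          · have hg'id : g' = gpd.d k := by rw [hg', hgk, gpd.inv_mul]
            rw [if_pos (hg'id ▸ d_mem_idts gpd k), if_pos hgk, hg'id]
            have : β.one (gpd.d k) * β.one (gpd.inv k) = β.one (gpd.inv k) := by
              rw [one_inv, β.one_idem]
            rw [this, β.act_unit]
          · have hg'nid : g' ∉ gpd.idts := by
              intro hid
              exact hgk (by rw [← hkg', (idts_r gpd hid).symm.trans hrg', gpd.mul_d])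
            rw [if_neg hg'nid, if_neg hgk, zero_mul, act_zero]
  · -- orthogonal ranges: every term vanishes
    have hgk : g ≠ k := fun h => hr (by rw [h])
    rw [if_neg hgk]
    refine Finset.sum_eq_zero fun i _ => ?_
    have h0 : β.one k * β.one g = 0 := by
      rw [β.one_r k, β.one_r g]
      exact hdec.2 _ _ (r_mem_idts gpd k) (r_mem_idts gpd g) hr
    calc β.act k (x i * β.one (gpd.inv k)) * β.act g (y i * β.one (gpd.inv g))
        = β.act k (x i * β.one (gpd.inv k)) * β.one k *
            (β.act g (y i * β.one (gpd.inv g)) * β.one g) := by rw [β.act_mem, β.act_mem]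
      _ = β.act k (x i * β.one (gpd.inv k)) *
            (β.act g (y i * β.one (gpd.inv g)) * (β.one k * β.one g)) := by
          rw [mul_assoc, ← mul_assoc (β.one k), β.one_central, mul_assoc]
      _ = 0 := by rw [h0, mul_zero, mul_zero]

/-- The `H`-trace lands in `R^{β_H}` for a subgroupoid `H`. -/
lemma trace_mem_fixed (hdec : IsDecomp gpd β) {H : Set G} (hs : gpd.IsSubgpd H) (a : R) :
    (∑ h : G, if h ∈ H then β.act h (a * β.one (gpd.inv h)) else 0)
      ∈ fixedSet gpd β H := by
  intro h' hh'
  have lhs_eq : β.act h' ((∑ h : G, if h ∈ H then β.act h (a * β.one (gpd.inv h)) else 0) *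
      β.one (gpd.inv h'))
      = ∑ h : G, if h ∈ H ∧ gpd.r h = gpd.d h'
          then β.act (gpd.mul h' h) (a * β.one (gpd.inv h)) else 0 := by
    rw [act_sum]
    refine Finset.sum_congr rfl fun h _ => ?_
    by_cases hh : h ∈ H
    · rw [if_pos hh]
      by_cases hrd : gpd.r h = gpd.d h'
      · rw [if_pos ⟨hh, hrd⟩, β.act_comp h' h a hrd.symm]
      · rw [if_neg (fun hc => hrd hc.2)]
        have hz : β.act h (a * β.one (gpd.inv h)) * β.one (gpd.inv h') = 0 := by
          have h0 : β.one h * β.one (gpd.inv h') = 0 := by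
            rw [β.one_r h, one_inv]
            exact hdec.2 _ _ (r_mem_idts gpd h) (d_mem_idts gpd h') hrd
          calc β.act h (a * β.one (gpd.inv h)) * β.one (gpd.inv h')
              = β.act h (a * β.one (gpd.inv h)) * β.one h * β.one (gpd.inv h') := by
                rw [β.act_mem]
            _ = β.act h (a * β.one (gpd.inv h)) * (β.one h * β.one (gpd.inv h')) :=
                mul_assoc _ _ _
            _ = 0 := by rw [h0, mul_zero]
        rw [hz, act_zero]
    · rw [if_neg hh, zero_mul, act_zero, if_neg (fun hc => hh hc.1)]
  have rhs_eq : (∑ h : G, if h ∈ H then β.act h (a * β.one (gpd.inv h)) else 0) * β.one h'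
      = ∑ h : G, if h ∈ H ∧ gpd.r h = gpd.r h'
          then β.act h (a * β.one (gpd.inv h)) else 0 := by
    rw [Finset.sum_mul]
    refine Finset.sum_congr rfl fun h _ => ?_
    by_cases hh : h ∈ H
    · rw [if_pos hh]
      by_cases hrr : gpd.r h = gpd.r h'
      · rw [if_pos ⟨hh, hrr⟩]
        have hhh' : β.one h' = β.one h := by rw [β.one_r h', ← hrr, ← β.one_r h]
        calc β.act h (a * β.one (gpd.inv h)) * β.one h'
            = β.act h (a * β.one (gpd.inv h)) * β.one h := by rw [hhh']
          _ = β.act h (a * β.one (gpd.inv h)) := β.act_mem h a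
      · rw [if_neg (fun hc => hrr hc.2)]
        have h0 : β.one h * β.one h' = 0 := by
          rw [β.one_r h, β.one_r h']
          exact hdec.2 _ _ (r_mem_idts gpd h) (r_mem_idts gpd h') hrr
        calc β.act h (a * β.one (gpd.inv h)) * β.one h'
            = β.act h (a * β.one (gpd.inv h)) * (β.one h * β.one h') := by
              rw [← mul_assoc, β.act_mem]
          _ = 0 := by rw [h0, mul_zero]
    · rw [if_neg hh, if_neg (fun hc => hh hc.1), zero_mul]
  rw [lhs_eq, rhs_eq, ← Finset.sum_filter, ← Finset.sum_filter]
  refine Finset.sum_nbij' (fun h => gpd.mul h' h) (fun k => gpd.mul (gpd.inv h') k)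
    ?_ ?_ ?_ ?_ ?_
  · intro h hmem
    rw [Finset.mem_filter] at hmem ⊢
    obtain ⟨-, hH, hrd⟩ := hmem
    exact ⟨Finset.mem_univ _, hs.2.2 h' hh' h hH hrd.symm, gpd.r_mul h' h hrd.symm⟩
  · intro k hmem
    rw [Finset.mem_filter] at hmem ⊢
    obtain ⟨-, hK, hrr⟩ := hmem
    have hd : gpd.d (gpd.inv h') = gpd.r k := by rw [gpd.d_inv, hrr]
    exact ⟨Finset.mem_univ _, hs.2.2 _ (hs.2.1 h' hh') k hK hd,
      by rw [gpd.r_mul _ _ hd, gpd.r_inv]⟩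
  · intro h hmem
    rw [Finset.mem_filter] at hmem
    obtain ⟨-, hH, hrd⟩ := hmem
    show gpd.mul (gpd.inv h') (gpd.mul h' h) = h
    rw [← gpd.assoc _ h' h (by rw [gpd.d_inv]) hrd.symm, gpd.inv_mul, ← hrd, gpd.r_mul_self]
  · intro k hmem
    rw [Finset.mem_filter] at hmem
    obtain ⟨-, hK, hrr⟩ := hmem
    show gpd.mul h' (gpd.mul (gpd.inv h') k) = k
    rw [← gpd.assoc h' (gpd.inv h') k (by rw [gpd.r_inv]) (by rw [gpd.d_inv, hrr]),
      gpd.mul_inv, ← hrr, gpd.r_mul_self]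
  · intro h hmem
    rw [Finset.mem_filter] at hmem
    obtain ⟨-, hH, hrd⟩ := hmem
    have : β.one (gpd.inv h) = β.one (gpd.inv (gpd.mul h' h)) := by
      rw [one_inv, one_inv, gpd.d_mul h' h hrd.symm]
    rw [this]


lemma gamma_subset_centralizer {H : Set G} :
    gammaSet gpd β H ⊆ Set.centralizer (fixedSet gpd β H) := by
  rintro v ⟨f, hf, hf0, rfl⟩
  rw [Set.mem_centralizer_iff]
  intro s hs
  rw [Finset.mul_sum, Finset.sum_mul]
  refine Finset.sum_congr rfl fun g _ => ?_
  by_cases hg : g ∈ H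
  · have h1 : f g * β.one g = f g := (hf g).1
    have h2 := (hf g).2 s
    rw [hs g hg] at h2
    calc s * f g = f g * (s * β.one g) := h2.symm
      _ = f g * (β.one g * s) := by rw [β.one_central]
      _ = f g * β.one g * s := by rw [mul_assoc]
      _ = f g * s := by rw [h1]
  · rw [hf0 g hg, mul_zero, zero_mul]

lemma centralizer_subset_gamma [Nonempty G] (hdec : IsDecomp gpd β)
    (hgal : IsGaloisExt gpd β) {H : Set G} (hw : gpd.IsWide H) :
    Set.centralizer (fixedSet gpd β H) ⊆ gammaSet gpd β H := by
  classical
  obtain ⟨n, x, y, hxy⟩ := hgal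
  intro v hv
  rw [Set.mem_centralizer_iff] at hv
  set F : Finset G := Finset.univ.filter (· ∈ H) with hFdef
  have hF' : ∀ a : R,
      (∑ j, x j * ∑ h ∈ F, β.act h (y j * a * β.one (gpd.inv h))) = a := by
    intro a
    calc (∑ j, x j * ∑ h ∈ F, β.act h (y j * a * β.one (gpd.inv h)))
        = ∑ j, ∑ h ∈ F, x j * β.act h (y j * a * β.one (gpd.inv h)) :=
          Finset.sum_congr rfl fun j _ => Finset.mul_sum _ _ _
      _ = ∑ h ∈ F, ∑ j, x j * β.act h (y j * a * β.one (gpd.inv h)) := Finset.sum_comm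
      _ = a := by rw [hFdef, Finset.sum_filter]; exact gal_wide gpd β hdec hw hxy a
  have hTH : ∀ b : R, v * (∑ h ∈ F, β.act h (b * β.one (gpd.inv h)))
      = (∑ h ∈ F, β.act h (b * β.one (gpd.inv h))) * v := by
    intro b
    have hm : (∑ h ∈ F, β.act h (b * β.one (gpd.inv h))) ∈ fixedSet gpd β H := by
      rw [hFdef, Finset.sum_filter]
      exact trace_mem_fixed gpd β hdec hw.1 b
    exact (hv _ hm).symm
  -- the master computation
  have master : ∀ (c : R) (g : G),
      (∑ i, c * x i * v * β.act g (y i * β.one (gpd.inv g)))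
        = if g ∈ H then ∑ j, x j * v * β.act g (y j * c * β.one (gpd.inv g))
          else 0 := by
    intro c g
    have inner : ∀ j : Fin n,
        (∑ i, (∑ h ∈ F, β.act h (y j * (c * x i) * β.one (gpd.inv h))) *
            β.act g (y i * β.one (gpd.inv g)))
          = if g ∈ H then β.act g (y j * c * β.one (gpd.inv g)) else 0 := by
      intro j
      have step1 : ∀ (h : G) (i : Fin n),
          β.act h (y j * (c * x i) * β.one (gpd.inv h))
            = β.act h (y j * c * β.one (gpd.inv h)) * β.act h (x i * β.one (gpd.inv h)) := by
        intro h i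
        rw [← mul_assoc (y j) c (x i), β.act_mul]
      calc (∑ i, (∑ h ∈ F, β.act h (y j * (c * x i) * β.one (gpd.inv h))) *
              β.act g (y i * β.one (gpd.inv g)))
          = ∑ h ∈ F, ∑ i, β.act h (y j * (c * x i) * β.one (gpd.inv h)) *
              β.act g (y i * β.one (gpd.inv g)) := by
            rw [Finset.sum_comm]
            exact Finset.sum_congr rfl fun i _ => Finset.sum_mul _ _ _
        _ = ∑ h ∈ F, β.act h (y j * c * β.one (gpd.inv h)) *
              ∑ i, β.act h (x i * β.one (gpd.inv h)) * β.act g (y i * β.one (gpd.inv g)) := by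
            refine Finset.sum_congr rfl fun h _ => ?_
            rw [Finset.mul_sum]
            exact Finset.sum_congr rfl fun i _ => by rw [step1 h i, mul_assoc]
        _ = ∑ h ∈ F, β.act h (y j * c * β.one (gpd.inv h)) *
              (if g = h then β.one h else 0) := by
            refine Finset.sum_congr rfl fun h _ => ?_
            rw [gal_transpose gpd β hdec hxy h g]
        _ = if g ∈ H then β.act g (y j * c * β.one (gpd.inv g)) else 0 := by
            have h1 : ∀ h ∈ F, β.act h (y j * c * β.one (gpd.inv h)) *
                (if g = h then β.one h else 0)
                  = if g = h then β.act h (y j * c * β.one (gpd.inv h)) * β.one h else 0 := by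
              intro h _; split <;> simp
            rw [Finset.sum_congr rfl h1, Finset.sum_ite_eq]
            by_cases hg : g ∈ H
            · rw [if_pos (by simp [hFdef, hg]), if_pos hg, β.act_mem]
            · rw [if_neg (by simp [hFdef, hg]), if_neg hg]
    calc (∑ i, c * x i * v * β.act g (y i * β.one (gpd.inv g)))
        = ∑ i, (∑ j, x j * ∑ h ∈ F, β.act h (y j * (c * x i) * β.one (gpd.inv h))) *
            (v * β.act g (y i * β.one (gpd.inv g))) := by
          refine Finset.sum_congr rfl fun i _ => ?_
          rw [hF' (c * x i), mul_assoc]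
      _ = ∑ i, ∑ j, x j * (v * ((∑ h ∈ F, β.act h (y j * (c * x i) * β.one (gpd.inv h))) *
            β.act g (y i * β.one (gpd.inv g)))) := by
          refine Finset.sum_congr rfl fun i _ => ?_
          rw [Finset.sum_mul]
          refine Finset.sum_congr rfl fun j _ => ?_
          rw [mul_assoc, ← mul_assoc _ v, ← hTH, mul_assoc v]
      _ = ∑ j, x j * (v * (∑ i, (∑ h ∈ F, β.act h (y j * (c * x i) * β.one (gpd.inv h))) *
            β.act g (y i * β.one (gpd.inv g)))) := by
          rw [Finset.sum_comm]
          refine Finset.sum_congr rfl fun j _ => ?_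
          rw [Finset.mul_sum, Finset.mul_sum]
      _ = ∑ j, x j * (v * (if g ∈ H then β.act g (y j * c * β.one (gpd.inv g)) else 0)) := by
          refine Finset.sum_congr rfl fun j _ => ?_
          rw [inner j]
      _ = if g ∈ H then ∑ j, x j * v * β.act g (y j * c * β.one (gpd.inv g)) else 0 := by
          by_cases hg : g ∈ H
          · simp only [if_pos hg]
            exact Finset.sum_congr rfl fun j _ => by rw [← mul_assoc]
          · simp only [if_neg hg, mul_zero]
            exact Finset.sum_const_zero
  -- vanishing off H
  have h2 : ∀ g : G, g ∉ H →
      (∑ i, x i * v * β.act g (y i * β.one (gpd.inv g))) = 0 := by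
    intro g hg
    have hm := master 1 g
    simp only [one_mul] at hm
    rwa [if_neg hg] at hm
  -- J_g membership
  have hJ : ∀ g : G,
      (∑ i, x i * v * β.act g (y i * β.one (gpd.inv g))) ∈ Jset gpd β g := by
    intro g
    constructor
    · rw [Finset.sum_mul]
      exact Finset.sum_congr rfl fun i _ => by rw [mul_assoc, β.act_mem]
    · intro w
      by_cases hg : g ∈ H
      · have hm := master w g
        rw [if_pos hg] at hm
        calc (∑ i, x i * v * β.act g (y i * β.one (gpd.inv g))) *
              β.act g (w * β.one (gpd.inv g))
            = ∑ i, x i * v * β.act g (y i * w * β.one (gpd.inv g)) := by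
              rw [Finset.sum_mul]
              refine Finset.sum_congr rfl fun i _ => ?_
              rw [mul_assoc (x i * v), ← β.act_mul]
          _ = ∑ i, w * x i * v * β.act g (y i * β.one (gpd.inv g)) := hm.symm
          _ = w * ∑ i, x i * v * β.act g (y i * β.one (gpd.inv g)) := by
              rw [Finset.mul_sum]
              refine Finset.sum_congr rfl fun i _ => ?_
              rw [← mul_assoc, ← mul_assoc]
      · rw [h2 g hg, zero_mul, mul_zero]
  -- the total sum is v
  have hsum : v = ∑ g : G, ∑ i, x i * v * β.act g (y i * β.one (gpd.inv g)) := by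
    have hGsub : gpd.IsSubgpd (Set.univ : Set G) :=
      ⟨⟨Classical.arbitrary G, trivial⟩, fun _ _ => trivial, fun _ _ _ _ _ => trivial⟩
    have hTG : ∀ b : R, (∑ h : G, β.act h (b * β.one (gpd.inv h))) ∈ fixedSet gpd β H := by
      intro b
      have hm := trace_mem_fixed gpd β hdec hGsub b
      simp only [Set.mem_univ, if_true] at hm
      exact fun h _ => hm h trivial
    have hone : (∑ i, x i * ∑ g : G, β.act g (y i * β.one (gpd.inv g))) = 1 := by
      calc (∑ i, x i * ∑ g : G, β.act g (y i * β.one (gpd.inv g)))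
          = ∑ i, ∑ g : G, x i * β.act g (y i * β.one (gpd.inv g)) :=
            Finset.sum_congr rfl fun i _ => Finset.mul_sum _ _ _
        _ = ∑ g : G, ∑ i, x i * β.act g (y i * β.one (gpd.inv g)) := Finset.sum_comm
        _ = ∑ g : G, (if g ∈ gpd.idts then β.one g else 0) :=
            Finset.sum_congr rfl fun g _ => hxy g
        _ = 1 := hdec.1
    calc v = 1 * v := (one_mul v).symm
      _ = (∑ i, x i * ∑ g : G, β.act g (y i * β.one (gpd.inv g))) * v := by rw [hone]
      _ = ∑ i, x i * (v * ∑ g : G, β.act g (y i * β.one (gpd.inv g))) := by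
          rw [Finset.sum_mul]
          refine Finset.sum_congr rfl fun i _ => ?_
          rw [mul_assoc, ← hv _ (hTG (y i))]
      _ = ∑ i, ∑ g : G, x i * v * β.act g (y i * β.one (gpd.inv g)) := by
          refine Finset.sum_congr rfl fun i _ => ?_
          rw [Finset.mul_sum, Finset.mul_sum]
          exact Finset.sum_congr rfl fun g _ => by rw [← mul_assoc]
      _ = ∑ g : G, ∑ i, x i * v * β.act g (y i * β.one (gpd.inv g)) := Finset.sum_comm
  exact ⟨fun g => ∑ i, x i * v * β.act g (y i * β.one (gpd.inv g)), hJ, h2, hsum⟩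

lemma gamma_eq_centralizer [Nonempty G] (hdec : IsDecomp gpd β)
    (hgal : IsGaloisExt gpd β) {H : Set G} (hw : gpd.IsWide H) :
    gammaSet gpd β H = Set.centralizer (fixedSet gpd β H) :=
  Set.Subset.antisymm (gamma_subset_centralizer gpd β)
    (centralizer_subset_gamma gpd β hdec hgal hw)

end ThetaGamma

end ThetaGammaProof


/-- Theorem 3.10: if `R` satisfies the double centralizer property
for `R^{β_H}` for each subgroupoid `H` of `G`, then `θ` is injective (on wide
subgroupoids) if and only if `γ` is injective (on wide subgroupoids). -/
theorem theta_injective_iff_gamma_injective {K : Type*} [CommRing K] {R : Type*}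
    [Ring R] [Algebra K R] {G : Type*} [Fintype G] [Nonempty G]
    (gpd : Gpd G) (β : GpdAct K R gpd)
    (hdec : IsDecomp gpd β) (hgal : IsGaloisExt gpd β)
    (hdc : ∀ H : Set G, gpd.IsSubgpd H →
      Set.centralizer (Set.centralizer (fixedSet gpd β H)) = fixedSet gpd β H) :
    (∀ H L : Set G, gpd.IsWide H → gpd.IsWide L →
        fixedSet gpd β H = fixedSet gpd β L → H = L) ↔
    (∀ H L : Set G, gpd.IsWide H → gpd.IsWide L →
        gammaSet gpd β H = gammaSet gpd β L → H = L) := by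
  constructor
  · intro ht H L hH hL hg
    refine ht H L hH hL ?_
    have h1 : Set.centralizer (fixedSet gpd β H) = Set.centralizer (fixedSet gpd β L) := by
      rw [← ThetaGamma.gamma_eq_centralizer gpd β hdec hgal hH,
        ← ThetaGamma.gamma_eq_centralizer gpd β hdec hgal hL, hg]
    rw [← hdc H hH.1, ← hdc L hL.1, h1]
  · intro hg H L hH hL ht
    refine hg H L hH hL ?_
    rw [ThetaGamma.gamma_eq_centralizer gpd β hdec hgal hH,
      ThetaGamma.gamma_eq_centralizer gpd β hdec hgal hL, ht]
end
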